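/- arXiv:2302.07377 — 2 statements merged into one kernel-verified Lean document; each statement's English description precedes it below -/
import Mathlib

section
/- The function h(x,y) = |x−y| / (√(1+|x|²)·√(1+|y|²)) defines a metric on ℝⁿ; in particular it satisfies the triangle inequality. -/
/-! The map `x ↦ (x, 1) / (1 + ‖x‖²)` is the inverse stereographic projection of `E` onto the
sphere of radius `1/2` centred at `(0, 1/2)` in `E × ℝ`, and `‖x - y‖ / (√(1 + ‖x‖²) √(1 + ‖y‖²))`
is exactly the Euclidean distance between the images of `x` and `y`. The metric axioms, the
triangle inequality in particular, are therefore inherited from the norm of `E × ℝ`. -/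

noncomputable def chordal {n : ℕ} (x y : EuclideanSpace ℝ (Fin n)) : ℝ :=
  ‖x - y‖ / (Real.sqrt (1 + ‖x‖ ^ 2) * Real.sqrt (1 + ‖y‖ ^ 2))

open RealInnerProductSpace

section

variable {E : Type*} [NormedAddCommGroup E]

lemma norm_toLp_one_sq (x : E) : ‖WithLp.toLp 2 (x, (1 : ℝ))‖ ^ 2 = 1 + ‖x‖ ^ 2 := by
  rw [WithLp.prod_norm_sq_eq_of_L2, WithLp.toLp_fst, WithLp.toLp_snd, norm_one, one_pow,
    add_comm]

variable [InnerProductSpace ℝ E]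

lemma inner_toLp_one (x y : E) :
    ⟪WithLp.toLp 2 (x, (1 : ℝ)), WithLp.toLp 2 (y, (1 : ℝ))⟫ = ⟪x, y⟫ + 1 := by
  rw [WithLp.prod_inner_apply, real_inner_self_eq_norm_sq]
  simp

noncomputable def chordalEmbedding (x : E) : WithLp 2 (E × ℝ) :=
  (1 + ‖x‖ ^ 2)⁻¹ • WithLp.toLp 2 (x, 1)

lemma norm_chordalEmbedding_sub_sq (x y : E) :
    ‖chordalEmbedding x - chordalEmbedding y‖ ^ 2 =
      ‖x - y‖ ^ 2 / ((1 + ‖x‖ ^ 2) * (1 + ‖y‖ ^ 2)) := by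
  have hx : 0 < 1 + ‖x‖ ^ 2 := by positivity
  have hy : 0 < 1 + ‖y‖ ^ 2 := by positivity
  rw [chordalEmbedding, chordalEmbedding, norm_sub_sq_real, norm_sub_sq_real, norm_smul,
    norm_smul, real_inner_smul_left, real_inner_smul_right, mul_pow, mul_pow, norm_toLp_one_sq,
    norm_toLp_one_sq, inner_toLp_one, Real.norm_of_nonneg (inv_pos.2 hx).le,
    Real.norm_of_nonneg (inv_pos.2 hy).le]
  field_simp
  ring

lemma norm_chordalEmbedding_sub (x y : E) :
    ‖chordalEmbedding x - chordalEmbedding y‖ =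
      ‖x - y‖ / (√(1 + ‖x‖ ^ 2) * √(1 + ‖y‖ ^ 2)) := by
  rw [← Real.sqrt_mul (by positivity), ← Real.sqrt_sq (norm_nonneg (x - y)),
    ← Real.sqrt_div' _ (by positivity), ← norm_chordalEmbedding_sub_sq,
    Real.sqrt_sq (norm_nonneg _)]

end

theorem chordal_is_metric {n : ℕ} :
    (∀ x y : EuclideanSpace ℝ (Fin n), 0 ≤ chordal x y) ∧
    (∀ x y : EuclideanSpace ℝ (Fin n), chordal x y = 0 ↔ x = y) ∧
    (∀ x y : EuclideanSpace ℝ (Fin n), chordal x y = chordal y x) ∧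
    (∀ x y z : EuclideanSpace ℝ (Fin n), chordal x z ≤ chordal x y + chordal y z) := by
  have h_eq (x y : EuclideanSpace ℝ (Fin n)) :
      chordal x y = ‖chordalEmbedding x - chordalEmbedding y‖ :=
    (norm_chordalEmbedding_sub x y).symm
  refine ⟨fun x y => ?_, fun x y => ?_, fun x y => ?_, fun x y z => ?_⟩
  · exact h_eq x y ▸ norm_nonneg _
  · have h_denom : √(1 + ‖x‖ ^ 2) * √(1 + ‖y‖ ^ 2) ≠ 0 := by positivity
    rw [chordal, div_eq_zero_iff, or_iff_left h_denom, norm_eq_zero, sub_eq_zero]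
  · rw [h_eq, h_eq, norm_sub_rev]
  · simp only [h_eq]
    exact norm_sub_le_norm_sub_add_norm_sub _ _ _
end

section
/- Every bounded convex domain in ℝⁿ with nonempty interior having a designated center point satisfies: for any z₀ ∈ ∂D₁, y* ∈ D₁ with δ* = dist(y*, ∂D₁), and any two points A, B ∈ B(z₀, δ*/8) ∩ D₁, there exist points C, D ∈ B̄(y*, δ*/2) such that the segments [A,C] and [B,D] lie in D₁ and dist([A,C],[B,D]) ≥ C₀·|A−B| for a constant C₀ > 0 depending only on δ* and diam(D₁). -/
/-! Let `m` be the midpoint of `A B`. Since `n ≥ 2` there is a unit vector orthogonal to `ys - m`;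
tilting it by `c` times the direction of `B - A` gives `u` with `⟪u, B - A⟫ ≥ c ‖B - A‖` and
`|⟪u, ys - m⟫| ≤ c ‖ys - m‖`. Take `C, D = ys ∓ (δ / 4) u`. The functional `⟪u, ·⟫` is at most some
`α` at `A` and `C` and at least `α + c ‖A - B‖` at `B` and `D`, hence, half-spaces being convex, on
the two segments, which are therefore `c ‖A - B‖ / ‖u‖` apart. With `c = δ / (8 diam D₁)` the tilt
is too small to spoil the separation of `C` from `D`. -/

noncomputable def setDist {n : ℕ} (A B : Set (EuclideanSpace ℝ (Fin n))) : ℝ :=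
  ⨅ p : A × B, dist (p.1 : EuclideanSpace ℝ (Fin n)) (p.2 : EuclideanSpace ℝ (Fin n))

open Metric RealInnerProductSpace Module

section InnerProductSpace

variable {E : Type*} [NormedAddCommGroup E] [InnerProductSpace ℝ E]

theorem ball_infDist_frontier_subset [FiniteDimensional ℝ E] {s : Set E} {x : E} (hx : x ∈ s) :
    ball x (infDist x (frontier s)) ⊆ s := by
  rcases eq_or_ne s Set.univ with rfl | hs
  · exact Set.subset_univ _
  obtain ⟨y, hy, hxy⟩ := exists_mem_frontier_infDist_compl_eq_dist hx hs
  calc ball x (infDist x (frontier s)) ⊆ ball x (infDist x sᶜ) :=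
        ball_subset_ball (hxy ▸ infDist_le_dist_of_mem hy)
    _ ⊆ s := ball_infDist_compl_subset

theorem exists_norm_eq_one_inner_eq_zero_inner_nonneg [FiniteDimensional ℝ E]
    (hE : 2 ≤ finrank ℝ E) (p v : E) :
    ∃ f : E, ‖f‖ = 1 ∧ ⟪f, p⟫ = 0 ∧ 0 ≤ ⟪f, v⟫ := by
  have : Nontrivial (ℝ ∙ p)ᗮ := by
    apply nontrivial_of_finrank_pos (R := ℝ)
    have hspan := finrank_span_le_card (R := ℝ) ({p} : Set E)
    have hsum := (ℝ ∙ p).finrank_add_finrank_orthogonal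
    simp only [Set.toFinset_singleton, Finset.card_singleton] at hspan
    omega
  obtain ⟨⟨w, hw⟩, hw0⟩ := exists_ne (0 : (ℝ ∙ p)ᗮ)
  have hw0 : w ≠ 0 := fun h => hw0 (by simp [h])
  have hwp : ⟪w, p⟫ = 0 := by
    rw [real_inner_comm]; exact Submodule.mem_orthogonal_singleton_iff_inner_right.mp hw
  set g := ‖w‖⁻¹ • w
  have hg : ‖g‖ = 1 := norm_smul_inv_norm hw0
  have hgp : ⟪g, p⟫ = 0 := by simp [g, real_inner_smul_left, hwp]
  rcases le_total 0 ⟪g, v⟫ with hgv | hgv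
  · exact ⟨g, hg, hgp, hgv⟩
  · exact ⟨-g, by rw [norm_neg, hg], by rw [inner_neg_left, hgp, neg_zero],
      by rw [inner_neg_left]; linarith⟩

theorem exists_inner_ge_abs_inner_le [FiniteDimensional ℝ E] (hE : 2 ≤ finrank ℝ E)
    {c : ℝ} (hc : 0 ≤ c) (p v : E) :
    ∃ u : E, ‖u‖ ≤ 1 + c ∧ 1 ≤ ⟪u, u⟫ ∧ |⟪u, p⟫| ≤ c * ‖p‖ ∧ c * ‖v‖ ≤ ⟪u, v⟫ := by
  obtain ⟨f, hf, hfp, hfv⟩ := exists_norm_eq_one_inner_eq_zero_inner_nonneg hE p v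
  set e := ‖v‖⁻¹ • v
  have he : ‖e‖ ≤ 1 := by
    rcases eq_or_ne v 0 with rfl | hv
    · simp [e]
    · exact (norm_smul_inv_norm hv).le
  have hev : ⟪e, v⟫ = ‖v‖ := by
    rcases eq_or_ne v 0 with rfl | hv
    · simp [e]
    · rw [real_inner_smul_left, real_inner_self_eq_norm_sq]
      field_simp [norm_ne_zero_iff.mpr hv]
  refine ⟨f + c • e, ?_, ?_, ?_, ?_⟩
  · calc ‖f + c • e‖ ≤ ‖f‖ + c * ‖e‖ := by
          simpa [norm_smul, abs_of_nonneg hc] using norm_add_le f (c • e)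
      _ ≤ 1 + c := by rw [hf]; nlinarith
  · have hfe : 0 ≤ ⟪f, e⟫ := by
      simp only [e, real_inner_smul_right]; positivity
    have : ⟪f + c • e, f + c • e⟫ = 1 + 2 * c * ⟪f, e⟫ + c ^ 2 * ‖e‖ ^ 2 := by
      simp only [inner_add_left, inner_add_right, real_inner_smul_left, real_inner_smul_right,
        real_inner_comm e f]
      rw [real_inner_self_eq_norm_sq, real_inner_self_eq_norm_sq, hf]
      ring
    rw [this]
    nlinarith [mul_nonneg hc hfe]
  · calc |⟪f + c • e, p⟫| = c * |⟪e, p⟫| := by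
          rw [inner_add_left, hfp, zero_add, real_inner_smul_left, abs_mul, abs_of_nonneg hc]
      _ ≤ c * (‖e‖ * ‖p‖) := by gcongr; exact abs_real_inner_le_norm e p
      _ ≤ c * ‖p‖ := by gcongr; nlinarith [norm_nonneg p]
  · rw [inner_add_left, real_inner_smul_left, hev]
    linarith

theorem le_inner_sub_of_mem_segment {u A B C D P Q : E} {α κ : ℝ}
    (hA : ⟪u, A⟫ ≤ α) (hC : ⟪u, C⟫ ≤ α) (hB : α + κ ≤ ⟪u, B⟫) (hD : α + κ ≤ ⟪u, D⟫)
    (hP : P ∈ segment ℝ A C) (hQ : Q ∈ segment ℝ B D) : κ ≤ ⟪u, Q - P⟫ := by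
  have hlin : IsLinearMap ℝ (fun x => ⟪u, x⟫) := (innerₛₗ ℝ u).isLinear
  have hP' : ⟪u, P⟫ ≤ α := (convex_halfSpace_le hlin α).segment_subset hA hC hP
  have hQ' : α + κ ≤ ⟪u, Q⟫ := (convex_halfSpace_ge hlin (α + κ)).segment_subset hB hD hQ
  rw [inner_sub_right]
  linarith

end InnerProductSpace

section Euclidean

variable {n : ℕ}

theorem le_setDist {S T : Set (EuclideanSpace ℝ (Fin n))} {r : ℝ} (hS : S.Nonempty)
    (hT : T.Nonempty) (h : ∀ x ∈ S, ∀ y ∈ T, r ≤ dist x y) : r ≤ setDist S T := by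
  have : Nonempty (S × T) := ⟨⟨hS.some, hS.some_mem⟩, ⟨hT.some, hT.some_mem⟩⟩
  exact le_ciInf fun p => h _ p.1.2 _ p.2.2

theorem exists_mem_closedBall_le_setDist_segment (hn : 2 ≤ n)
    {A B y : EuclideanSpace ℝ (Fin n)} {ρ c : ℝ} (hc₀ : 0 ≤ c) (hc₁ : c ≤ 1)
    (hcy : c * ‖y - midpoint ℝ A B‖ ≤ ρ / 4)
    (hAB : ‖A - B‖ ≤ ρ / 2) :
    ∃ C ∈ closedBall y ρ, ∃ D ∈ closedBall y ρ,
      c / 2 * ‖A - B‖ ≤ setDist (segment ℝ A C) (segment ℝ B D) := by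
  obtain ⟨u, hu, huu, hup, huv⟩ := exists_inner_ge_abs_inner_le
    (finrank_euclideanSpace_fin (𝕜 := ℝ) ▸ hn) hc₀ (y - midpoint ℝ A B) (B - A)
  have hρ : 0 ≤ ρ := by linarith [norm_nonneg (A - B)]
  have hstep : ‖(ρ / 2) • u‖ ≤ ρ := by
    rw [norm_smul, Real.norm_of_nonneg (by positivity)]; nlinarith
  refine ⟨y - (ρ / 2) • u, by simpa [dist_eq_norm] using hstep,
    y + (ρ / 2) • u, by simpa [dist_eq_norm] using hstep, ?_⟩
  have hcε : c * ‖A - B‖ ≤ ρ / 2 := by nlinarith [norm_nonneg (A - B)]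
  have hym := abs_le.mp (hup.trans hcy)
  rw [norm_sub_rev] at huv
  simp only [midpoint_eq_smul_add, invOf_eq_inv, inner_sub_right, inner_add_right,
    real_inner_smul_right] at hym huv
  refine le_setDist ⟨A, left_mem_segment ℝ _ _⟩ ⟨B, left_mem_segment ℝ _ _⟩
    fun P hP Q hQ => ?_
  have hsep := le_inner_sub_of_mem_segment (u := u)
    (α := (⟪u, A⟫ + ⟪u, B⟫) / 2 - c * ‖A - B‖ / 2) (κ := c * ‖A - B‖)
    (by linarith) (by simp only [inner_sub_right, real_inner_smul_right]; nlinarith)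
    (by linarith) (by simp only [inner_add_right, real_inner_smul_right]; nlinarith) hP hQ
  calc c / 2 * ‖A - B‖ ≤ ‖u‖ * ‖Q - P‖ / 2 := by linarith [real_inner_le_norm u (Q - P)]
    _ ≤ dist P Q := by
      rw [dist_comm, dist_eq_norm]; nlinarith [norm_nonneg (Q - P)]

end Euclidean

theorem convex_domain_separated_segments_general {n : ℕ} (hn : 2 ≤ n)
    (D₁ : Set (EuclideanSpace ℝ (Fin n)))
    (hbdd : Bornology.IsBounded D₁) (hconv : Convex ℝ D₁)
    (z₀ : EuclideanSpace ℝ (Fin n)) (hz₀ : z₀ ∈ frontier D₁)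
    (ys : EuclideanSpace ℝ (Fin n)) (hys : ys ∈ D₁)
    (δs : ℝ) (hδs : δs = Metric.infDist ys (frontier D₁)) (hδpos : 0 < δs) :
    ∃ C₀ : ℝ, 0 < C₀ ∧
      ∀ A ∈ Metric.ball z₀ (δs / 8) ∩ D₁, ∀ B ∈ Metric.ball z₀ (δs / 8) ∩ D₁,
        ∃ C ∈ Metric.closedBall ys (δs / 2), ∃ D ∈ Metric.closedBall ys (δs / 2),
          segment ℝ A C ⊆ D₁ ∧ segment ℝ B D ⊆ D₁ ∧
          C₀ * ‖A - B‖ ≤ setDist (segment ℝ A C) (segment ℝ B D) := by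
  have hδd : δs ≤ diam D₁ := calc
    δs ≤ dist ys z₀ := hδs ▸ infDist_le_dist_of_mem hz₀
    _ ≤ diam (closure D₁) := dist_le_diam_of_mem hbdd.closure (subset_closure hys)
      (frontier_subset_closure hz₀)
    _ = diam D₁ := diam_closure D₁
  have hd : 0 < diam D₁ := hδpos.trans_le hδd
  have hball : closedBall ys (δs / 2) ⊆ D₁ :=
    (closedBall_subset_ball (by linarith)).trans (hδs ▸ ball_infDist_frontier_subset hys)
  set c := δs / (8 * diam D₁)
  refine ⟨c / 2, by positivity, ?_⟩
  rintro A ⟨hAz, hA⟩ B ⟨hBz, hB⟩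
  have hc₁ : c ≤ 1 := (div_le_one (by positivity)).mpr (by linarith)
  have hcy : c * ‖ys - midpoint ℝ A B‖ ≤ δs / 2 / 4 := calc
    c * ‖ys - midpoint ℝ A B‖ ≤ c * diam D₁ := by
      rw [← dist_eq_norm]
      gcongr
      exact dist_le_diam_of_mem hbdd hys (hconv.midpoint_mem hA hB)
    _ = δs / 2 / 4 := by simp only [c]; field_simp; ring
  have hAB : ‖A - B‖ ≤ δs / 2 / 2 := by
    rw [← dist_eq_norm]
    linarith [dist_triangle_right A B z₀, mem_ball.mp hAz, mem_ball.mp hBz]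
  obtain ⟨C, hC, D, hD, hsep⟩ :=
    exists_mem_closedBall_le_setDist_segment hn (by positivity) hc₁ hcy hAB
  exact ⟨C, hC, D, hD, hconv.segment_subset hA (hball hC), hconv.segment_subset hB (hball hD),
    hsep⟩

theorem convex_domain_separated_segments {n : ℕ} (hn : 2 ≤ n)
    (D₁ : Set (EuclideanSpace ℝ (Fin n)))
    (hopen : IsOpen D₁) (hbdd : Bornology.IsBounded D₁) (hconv : Convex ℝ D₁)
    (hne : D₁.Nonempty)
    (z₀ : EuclideanSpace ℝ (Fin n)) (hz₀ : z₀ ∈ frontier D₁)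
    (ys : EuclideanSpace ℝ (Fin n)) (hys : ys ∈ D₁)
    (δs : ℝ) (hδs : δs = Metric.infDist ys (frontier D₁)) (hδpos : 0 < δs) :
    ∃ C₀ : ℝ, 0 < C₀ ∧
      ∀ A ∈ Metric.ball z₀ (δs / 8) ∩ D₁, ∀ B ∈ Metric.ball z₀ (δs / 8) ∩ D₁,
        ∃ C ∈ Metric.closedBall ys (δs / 2), ∃ D ∈ Metric.closedBall ys (δs / 2),
          segment ℝ A C ⊆ D₁ ∧ segment ℝ B D ⊆ D₁ ∧
          C₀ * ‖A - B‖ ≤ setDist (segment ℝ A C) (segment ℝ B D) :=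
  convex_domain_separated_segments_general hn D₁ hbdd hconv z₀ hz₀ ys hys δs hδs hδpos
end
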